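/- Let (a_i,b_i)_{i=1}^s be a composition of positive integers with a_1 ≥ 2 and b_1 ≥ 2, let λ ∈ ℂ not be a positive integer, and set λ' = λ−1. If s ≥ 2 or b_1 ≥ 2 (as assumed), then λ·[{(a_1,0),b_1,(a_2,0),b_2,…};λ] − [{(a_1−1,0),b_1,(a_2,0),b_2,…};λ] − [{(a_1,0),b_1−1,(a_2,0),b_2,…};λ] = λ'·[{(a_1,1),b_1,(a_2,0),b_2,…};λ] − [{(a_1−1,1),b_1,(a_2,0),b_2,…};λ], where in each bracket only the displayed first block is modified and all later blocks (a_i,0),b_i for i = 2,…,s are unchanged, and all brackets are evaluated at the indicated argument (λ on both sides except for the prefactor λ'). -/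

import Mathlib

/-- Strictly decreasing tuples `m 0 > m 1 > ⋯ > m (N-1) ≥ 1` of positive integers,
padded by `0` from position `N` on. -/
def DecTuple (N : ℕ) : Set (ℕ → ℕ) :=
  {m | (∀ j, j + 1 < N → m (j + 1) < m j) ∧ (∀ j, j < N → 1 ≤ m j) ∧ ∀ j, N ≤ j → m j = 0}

/-- The bracket `[{(a₁,d₁),b₁,…,(a_s,d_s),b_s};λ] =
Σ_{m₁>⋯>m_{B_s}≥1} Πᵢ (m_{B_{i-1}+1} - dᵢ)^{-aᵢ} Π_{j=B_{i-1}+1}^{B_i} (m_j-λ)⁻¹`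
(0-based indices). -/
noncomputable def bracket (s : ℕ) (a b d : ℕ → ℕ) (lam : ℂ) : ℂ :=
  ∑' m : DecTuple (∑ t ∈ Finset.range s, b t),
    ∏ i ∈ Finset.range s,
      (((m.1 (∑ t ∈ Finset.range i, b t) : ℂ) - (d i : ℕ)) ^ a i)⁻¹ *
        ∏ j ∈ Finset.Ico (∑ t ∈ Finset.range i, b t) (∑ t ∈ Finset.range (i + 1), b t),
          ((m.1 j : ℂ) - lam)⁻¹


/-!
Each summand of the four brackets with an unshifted or shifted first block has the form
`h(m₁) (m₁ - λ)⁻¹ T(m₂, m₃, …)`. The identities `λ x⁻ᵃ - x⁻⁽ᵃ⁻¹⁾ = -(x - λ) x⁻ᵃ` and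
`(λ - 1)(x - 1)⁻ᵃ - (x - 1)⁻⁽ᵃ⁻¹⁾ = -(x - λ)(x - 1)⁻ᵃ` cancel the factor `(m₁ - λ)⁻¹`, so the
difference of the two sides, without the `b₁ - 1` bracket, is `∑ ((m₁ - 1)⁻ᵃ - m₁⁻ᵃ) T(m₂, …)`.
Summing over `m₁ > m₂` telescopes to `m₂⁻ᵃ T(m₂, …)`, which is the summand of the bracket with
`b₁` lowered by one. Rearranging is justified by absolute convergence, which follows from
`|k - λ|⁻¹ ≤ C / k` and `∑_{m₁ > ⋯ > m_N ≥ 1} m₁⁻² ∏_{j ≥ 2} m_j⁻¹ < ∞`.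
-/
open Finset

namespace DecTuple

def cons (k : ℕ) (n : ℕ → ℕ) : ℕ → ℕ
  | 0 => k
  | j + 1 => n j

variable {N : ℕ}

lemma one_le_apply (m : DecTuple N) {j : ℕ} (hj : j < N) : 1 ≤ m.1 j := m.2.2.1 j hj

lemma apply_one_lt_apply_zero (m : DecTuple (N + 1)) : m.1 1 < m.1 0 := by
  rcases N with _ | N
  · rw [m.2.2.2 1 le_rfl]
    exact one_le_apply m Nat.zero_lt_one
  · exact m.2.1 0 (by omega)

lemma two_le_apply_zero (m : DecTuple (N + 2)) : 2 ≤ m.1 0 :=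
  (one_le_apply m (j := 1) (by omega)).trans_lt (apply_one_lt_apply_zero m)

lemma tail_mem (m : DecTuple (N + 1)) : (fun j => m.1 (j + 1)) ∈ DecTuple N :=
  ⟨fun j hj => m.2.1 (j + 1) (by omega), fun j hj => m.2.2.1 (j + 1) (by omega),
    fun j hj => m.2.2.2 (j + 1) (by omega)⟩

lemma cons_mem (n : DecTuple N) (i : ℕ) : cons (n.1 0 + 1 + i) n.1 ∈ DecTuple (N + 1) := by
  refine ⟨fun j hj => ?_, fun j hj => ?_, fun j hj => ?_⟩
  · cases j with
    | zero => show n.1 0 < n.1 0 + 1 + i; omega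
    | succ j => exact n.2.1 j (by omega)
  · cases j with
    | zero => show 1 ≤ n.1 0 + 1 + i; omega
    | succ j => exact n.2.2.1 j (by omega)
  · cases j with
    | zero => omega
    | succ j => exact n.2.2.2 j (by omega)

/-- A decreasing tuple is its tail together with the gap `m 0 - m 1 - 1 ≥ 0` above it. -/
def consEquiv (N : ℕ) : DecTuple N × ℕ ≃ DecTuple (N + 1) where
  toFun p := ⟨cons (p.1.1 0 + 1 + p.2) p.1.1, cons_mem p.1 p.2⟩
  invFun m := (⟨fun j => m.1 (j + 1), tail_mem m⟩, m.1 0 - m.1 1 - 1)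
  left_inv p := by
    ext
    · rfl
    · show p.1.1 0 + 1 + p.2 - p.1.1 0 - 1 = p.2
      omega
  right_inv m := by
    have := apply_one_lt_apply_zero m
    ext j
    cases j with
    | zero => show m.1 1 + 1 + (m.1 0 - m.1 1 - 1) = m.1 0; omega
    | succ j => rfl

@[simp] lemma consEquiv_apply_zero (p : DecTuple N × ℕ) :
    (consEquiv N p).1 0 = p.1.1 0 + 1 + p.2 := rfl

@[simp] lemma consEquiv_apply_succ (p : DecTuple N × ℕ) (j : ℕ) :
    (consEquiv N p).1 (j + 1) = p.1.1 j := rfl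

end DecTuple

lemma summable_inv_sq_add (c : ℕ) : Summable fun i : ℕ => (((c + 1 + i : ℕ) : ℝ) ^ 2)⁻¹ :=
  (Real.summable_nat_pow_inv.2 one_lt_two).comp_injective (add_right_injective (c + 1))

lemma tsum_inv_sq_add_le (c : ℕ) :
    ∑' i : ℕ, (((c + 1 + i : ℕ) : ℝ) ^ 2)⁻¹ ≤ 2 / (c + 1) := by
  refine Real.tsum_le_of_sum_range_le (fun _ => by positivity) fun n => ?_
  have hIoo : ∑ i ∈ range n, (((c + 1 + i : ℕ) : ℝ) ^ 2)⁻¹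
      = ∑ i ∈ Ioo c (c + 1 + n), ((i : ℝ) ^ 2)⁻¹ := by
    rw [← Ico_add_one_left_eq_Ioo, sum_Ico_eq_sum_range, Nat.add_sub_cancel_left]
  exact hIoo ▸ sum_Ioo_inv_sq_le c (c + 1 + n)

lemma summable_decTuple_weight (N : ℕ) :
    Summable fun m : DecTuple (N + 1) =>
      ((m.1 0 : ℝ) ^ 2)⁻¹ * ∏ j ∈ range N, (m.1 (j + 1) : ℝ)⁻¹ := by
  induction N with
  | zero =>
    have hinj : Function.Injective fun m : DecTuple 1 => m.1 0 := fun m m' h =>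
      Subtype.ext <| funext fun j => by
        cases j with
        | zero => exact h
        | succ j => rw [m.2.2.2 _ (by omega), m'.2.2.2 _ (by omega)]
    simpa [Function.comp_def] using (Real.summable_nat_pow_inv.2 one_lt_two).comp_injective hinj
  | succ N ih =>
    rw [← (DecTuple.consEquiv (N + 1)).summable_iff, summable_prod_of_nonneg
      (fun p => by simp only [Pi.zero_apply, Function.comp_apply]; positivity)]
    simp only [Function.comp_apply, DecTuple.consEquiv_apply_zero, DecTuple.consEquiv_apply_succ]
    refine ⟨fun n => (summable_inv_sq_add _).mul_right _, ?_⟩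
    refine (ih.mul_left 2).of_nonneg_of_le (fun n => tsum_nonneg fun i => by positivity)
      fun n => ?_
    have hn : (0 : ℝ) < n.1 0 := by exact_mod_cast DecTuple.one_le_apply n N.succ_pos
    rw [tsum_mul_right, prod_range_succ']
    calc (∑' i, (((n.1 0 + 1 + i : ℕ) : ℝ) ^ 2)⁻¹) *
          ((∏ j ∈ range N, (n.1 (j + 1) : ℝ)⁻¹) * (n.1 0 : ℝ)⁻¹)
        ≤ 2 / (n.1 0 + 1) * ((∏ j ∈ range N, (n.1 (j + 1) : ℝ)⁻¹) * (n.1 0 : ℝ)⁻¹) := by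
          gcongr
          exact_mod_cast tsum_inv_sq_add_le (n.1 0)
      _ ≤ 2 / n.1 0 * ((∏ j ∈ range N, (n.1 (j + 1) : ℝ)⁻¹) * (n.1 0 : ℝ)⁻¹) := by
          gcongr; linarith
      _ = 2 * (((n.1 0 : ℝ) ^ 2)⁻¹ * ∏ j ∈ range N, (n.1 (j + 1) : ℝ)⁻¹) := by ring

lemma Summable.tsum_sub_add_one {E : Type*} [NormedAddCommGroup E] [CompleteSpace E]
    {f : ℕ → E} (hf : Summable f) : ∑' i, (f i - f (i + 1)) = f 0 := by
  rw [hf.tsum_sub ((summable_nat_add_iff 1).2 hf), hf.tsum_eq_zero_add, add_sub_cancel_right]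

lemma tsum_inv_natCast_pow_telescope (c : ℕ) {a : ℕ} (ha : 2 ≤ a) :
    ∑' i : ℕ, (((((c + 1 + i : ℕ) : ℂ) - 1) ^ a)⁻¹ - (((c + 1 + i : ℕ) : ℂ) ^ a)⁻¹)
      = ((c : ℂ) ^ a)⁻¹ := by
  have hf : Summable fun i : ℕ => (((c + i : ℕ) : ℂ) ^ a)⁻¹ := by
    refine Summable.of_norm <|
      ((Real.summable_nat_pow_inv.2 ha).comp_injective (add_right_injective c)).congr fun i => ?_
    rw [norm_inv, norm_pow, Complex.norm_natCast, Function.comp_apply]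
  calc _ = ∑' i : ℕ, ((((c + i : ℕ) : ℂ) ^ a)⁻¹ - (((c + (i + 1) : ℕ) : ℂ) ^ a)⁻¹) :=
        tsum_congr fun i => by push_cast; ring_nf
    _ = ((c : ℂ) ^ a)⁻¹ := by rw [hf.tsum_sub_add_one, add_zero]

lemma tsum_inv_sub_one_pow_sub_inv_pow_mul {N a : ℕ} (ha : 2 ≤ a) (g : (ℕ → ℕ) → ℂ)
    (hg : Summable fun m : DecTuple (N + 1) =>
      ((((m.1 0 : ℂ) - 1) ^ a)⁻¹ - ((m.1 0 : ℂ) ^ a)⁻¹) * g fun j => m.1 (j + 1)) :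
    ∑' m : DecTuple (N + 1), ((((m.1 0 : ℂ) - 1) ^ a)⁻¹ - ((m.1 0 : ℂ) ^ a)⁻¹) *
        g (fun j => m.1 (j + 1))
      = ∑' n : DecTuple N, ((n.1 0 : ℂ) ^ a)⁻¹ * g n.1 := by
  rw [← (DecTuple.consEquiv N).summable_iff, Function.comp_def] at hg
  rw [← (DecTuple.consEquiv N).tsum_eq, hg.tsum_prod]
  refine tsum_congr fun n => ?_
  simp only [DecTuple.consEquiv_apply_zero, DecTuple.consEquiv_apply_succ]
  rw [tsum_mul_right, tsum_inv_natCast_pow_telescope _ ha]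

lemma exists_norm_inv_natCast_sub_le (lam : ℂ) :
    ∃ C : ℝ, ∀ k : ℕ, 1 ≤ k → ‖((k : ℂ) - lam)⁻¹‖ ≤ C * (k : ℝ)⁻¹ := by
  obtain ⟨C, hC⟩ := (tendsto_natCast_div_add_atTop (-lam)).norm.bddAbove_range
  refine ⟨C, fun k hk => ?_⟩
  calc ‖((k : ℂ) - lam)⁻¹‖ = ‖(k : ℂ) / (k + -lam)‖ * (k : ℝ)⁻¹ := by
        rw [← sub_eq_add_neg, norm_div, norm_inv, Complex.norm_natCast]
        field_simp
    _ ≤ C * (k : ℝ)⁻¹ := by gcongr; exact hC ⟨k, rfl⟩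

lemma norm_inv_natCast_pow_le (k : ℕ) {a : ℕ} (ha : 1 ≤ a) : ‖((k : ℂ) ^ a)⁻¹‖ ≤ (k : ℝ)⁻¹ := by
  rw [norm_inv, norm_pow, Complex.norm_natCast, ← inv_pow]
  exact pow_le_of_le_one (by positivity) (Nat.cast_inv_le_one k) (by omega)

lemma norm_inv_natCast_sub_one_pow_le {k : ℕ} (hk : 2 ≤ k) {a : ℕ} (ha : 1 ≤ a) :
    ‖(((k : ℂ) - 1) ^ a)⁻¹‖ ≤ 2 * (k : ℝ)⁻¹ := by
  have hcast : (k : ℂ) - 1 = ((k - 1 : ℕ) : ℂ) := by push_cast [(by omega : 1 ≤ k)]; ring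
  rw [hcast]
  refine (norm_inv_natCast_pow_le _ ha).trans ?_
  rw [← div_eq_mul_inv, le_div_iff₀ (by positivity), inv_mul_eq_div,
    div_le_iff₀ (by exact_mod_cast (by omega : 0 < k - 1))]
  exact_mod_cast (by omega : k ≤ 2 * (k - 1))

noncomputable def bracketTerm (s : ℕ) (a b d : ℕ → ℕ) (lam : ℂ) (m : ℕ → ℕ) : ℂ :=
  ∏ i ∈ range s, (((m (∑ t ∈ range i, b t) : ℂ) - (d i : ℕ)) ^ a i)⁻¹ *
    ∏ j ∈ Ico (∑ t ∈ range i, b t) (∑ t ∈ range (i + 1), b t), ((m j : ℂ) - lam)⁻¹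

/-- What remains of `bracketTerm s a b d lam m` after the factors `(m 0 - d 0) ^ a 0` and
`m 0 - lam` are split off, as a function of the shifted tuple `n j = m (j + 1)`. -/
noncomputable def tailTerm (s : ℕ) (a b d : ℕ → ℕ) (lam : ℂ) (n : ℕ → ℕ) : ℂ :=
  (∏ i ∈ Ico 1 s, (((n (∑ t ∈ range i, b t - 1) : ℂ) - (d i : ℕ)) ^ a i)⁻¹) *
    ∏ j ∈ range (∑ t ∈ range s, b t - 1), ((n j : ℂ) - lam)⁻¹

lemma prod_range_prod_Ico_sum_range {M : Type*} [CommMonoid M] (f : ℕ → M) (b : ℕ → ℕ)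
    (s : ℕ) :
    ∏ i ∈ range s, ∏ j ∈ Ico (∑ t ∈ range i, b t) (∑ t ∈ range (i + 1), b t), f j
      = ∏ j ∈ range (∑ t ∈ range s, b t), f j := by
  induction s with
  | zero => simp
  | succ s ih =>
    rw [prod_range_succ, ih, prod_range_mul_prod_Ico _ (sum_le_sum_of_subset
      (range_subset_range.2 s.le_succ))]

lemma bracketTerm_eq (s : ℕ) (a b d : ℕ → ℕ) (lam : ℂ) (m : ℕ → ℕ) :
    bracketTerm s a b d lam m
      = (∏ i ∈ range s, (((m (∑ t ∈ range i, b t) : ℂ) - (d i : ℕ)) ^ a i)⁻¹) *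
          ∏ j ∈ range (∑ t ∈ range s, b t), ((m j : ℂ) - lam)⁻¹ := by
  rw [bracketTerm, prod_mul_distrib, prod_range_prod_Ico_sum_range]

lemma one_le_sum_range {b : ℕ → ℕ} (hb : 1 ≤ b 0) {i : ℕ} (hi : 1 ≤ i) :
    1 ≤ ∑ t ∈ range i, b t :=
  hb.trans (single_le_sum (fun _ _ => Nat.zero_le _) (mem_range.2 hi))

variable {s : ℕ} {a b d : ℕ → ℕ} {lam : ℂ}

lemma bracketTerm_eq_mul_tailTerm (hs : 1 ≤ s) (hb : 1 ≤ b 0) (m : ℕ → ℕ) :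
    bracketTerm s a b d lam m
      = (((m 0 : ℂ) - (d 0 : ℕ)) ^ a 0)⁻¹ * ((m 0 : ℂ) - lam)⁻¹ *
          tailTerm s a b d lam (fun j => m (j + 1)) := by
  have hheads : ∏ i ∈ Ico 1 s, (((m (∑ t ∈ range i, b t) : ℂ) - (d i : ℕ)) ^ a i)⁻¹
      = ∏ i ∈ Ico 1 s, (((m (∑ t ∈ range i, b t - 1 + 1) : ℂ) - (d i : ℕ)) ^ a i)⁻¹ :=
    prod_congr rfl fun i hi => by
      rw [Nat.sub_add_cancel (one_le_sum_range hb (mem_Ico.1 hi).1)]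
  obtain ⟨N, hN⟩ : ∃ N, ∑ t ∈ range s, b t = N + 1 :=
    ⟨_, (Nat.sub_add_cancel (one_le_sum_range hb hs)).symm⟩
  rw [bracketTerm_eq, tailTerm, prod_range_eq_mul_Ico _ hs, hheads, hN,
    prod_range_succ', Nat.add_sub_cancel]
  simp only [range_zero, sum_empty]
  ring

lemma sum_range_update_zero_pred (hb : 1 ≤ b 0) (i : ℕ) :
    ∑ t ∈ range i, Function.update b 0 (b 0 - 1) t = ∑ t ∈ range i, b t - 1 := by
  cases i with
  | zero => simp
  | succ i =>
    rw [sum_range_succ', sum_range_succ' b]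
    simp only [Function.update_self, ne_eq, Nat.succ_ne_zero, not_false_eq_true,
      Function.update_of_ne]
    omega

lemma bracketTerm_update_pred (hs : 1 ≤ s) (hb : 1 ≤ b 0) (n : ℕ → ℕ) :
    bracketTerm s a (Function.update b 0 (b 0 - 1)) d lam n
      = (((n 0 : ℂ) - (d 0 : ℕ)) ^ a 0)⁻¹ * tailTerm s a b d lam n := by
  rw [bracketTerm_eq, tailTerm]
  simp only [sum_range_update_zero_pred hb]
  rw [prod_range_eq_mul_Ico _ hs]
  simp only [range_zero, sum_empty, Nat.zero_sub]
  ring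

lemma tailTerm_congr {a' d' : ℕ → ℕ} (ha : ∀ i, 1 ≤ i → a i = a' i)
    (hd : ∀ i, 1 ≤ i → d i = d' i) : tailTerm s a b d lam = tailTerm s a' b d' lam := by
  funext n
  rw [tailTerm, tailTerm]
  congr 1
  exact prod_congr rfl fun i hi => by rw [ha i (mem_Ico.1 hi).1, hd i (mem_Ico.1 hi).1]

lemma bracket_eq_tsum_mul_tailTerm (hs : 1 ≤ s) (hb : 1 ≤ b 0) {N : ℕ}
    (hN : ∑ t ∈ range s, b t = N + 1) :
    bracket s a b d lam = ∑' m : DecTuple (N + 1),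
      (((m.1 0 : ℂ) - (d 0 : ℕ)) ^ a 0)⁻¹ * ((m.1 0 : ℂ) - lam)⁻¹ *
        tailTerm s a b d lam (fun j => m.1 (j + 1)) := by
  change ∑' m : DecTuple (∑ t ∈ range s, b t), bracketTerm s a b d lam m.1 = _
  rw [hN]
  exact tsum_congr fun m => bracketTerm_eq_mul_tailTerm hs hb m.1

lemma bracket_update_pred_eq_tsum (hs : 1 ≤ s) (hb : 1 ≤ b 0) {N : ℕ}
    (hN : ∑ t ∈ range s, b t = N + 1) :
    bracket s a (Function.update b 0 (b 0 - 1)) d lam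
      = ∑' n : DecTuple N, (((n.1 0 : ℂ) - (d 0 : ℕ)) ^ a 0)⁻¹ * tailTerm s a b d lam n.1 := by
  change ∑' n : DecTuple (∑ t ∈ range s, Function.update b 0 (b 0 - 1) t),
    bracketTerm s a (Function.update b 0 (b 0 - 1)) d lam n.1 = _
  rw [sum_range_update_zero_pred hb, hN, Nat.add_sub_cancel]
  exact tsum_congr fun n => bracketTerm_update_pred hs hb n.1

lemma norm_inv_natCast_sub_natCast_pow_le_one (x e a : ℕ) : ‖(((x : ℂ) - e) ^ a)⁻¹‖ ≤ 1 := by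
  have hcast : (x : ℂ) - e = ((x - e : ℤ) : ℂ) := by push_cast; ring
  rw [hcast, norm_inv, norm_pow, Complex.norm_intCast, ← Int.cast_abs]
  rcases eq_or_ne (x - e : ℤ) 0 with h | h
  · rw [h]
    rcases a with _ | a <;> simp
  · exact inv_le_one_of_one_le₀ (one_le_pow₀ (by exact_mod_cast Int.one_le_abs h))

lemma norm_tailTerm_le {C : ℝ} (hC : ∀ k : ℕ, 1 ≤ k → ‖((k : ℂ) - lam)⁻¹‖ ≤ C * (k : ℝ)⁻¹)
    {n : ℕ → ℕ} (hn : ∀ j, j < ∑ t ∈ range s, b t - 1 → 1 ≤ n j) :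
    ‖tailTerm s a b d lam n‖
      ≤ C ^ (∑ t ∈ range s, b t - 1) * ∏ j ∈ range (∑ t ∈ range s, b t - 1), (n j : ℝ)⁻¹ := by
  rw [tailTerm, norm_mul]
  refine (mul_le_mul ?_ ?_ (norm_nonneg _) zero_le_one).trans_eq (one_mul _)
  · rw [Complex.norm_prod]
    exact prod_le_one (fun _ _ => norm_nonneg _) fun i _ =>
      norm_inv_natCast_sub_natCast_pow_le_one _ _ _
  · rw [Complex.norm_prod]
    refine (prod_le_prod (fun _ _ => norm_nonneg _) fun j hj =>
      hC _ (hn j (mem_range.1 hj))).trans_eq ?_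
    rw [prod_mul_distrib, prod_const, card_range]

lemma summable_mul_tailTerm {N : ℕ} (hN : ∑ t ∈ range s, b t = N + 2) (h : ℕ → ℂ) {c : ℝ}
    (hh : ∀ k, 2 ≤ k → ‖h k‖ ≤ c * (k : ℝ)⁻¹) :
    Summable fun m : DecTuple (N + 2) =>
      h (m.1 0) * ((m.1 0 : ℂ) - lam)⁻¹ * tailTerm s a b d lam (fun j => m.1 (j + 1)) := by
  obtain ⟨C, hC⟩ := exists_norm_inv_natCast_sub_le lam
  refine Summable.of_norm_bounded
    ((summable_decTuple_weight (N + 1)).mul_left (c * C * C ^ (N + 1))) fun m => ?_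
  have hm0 := DecTuple.two_le_apply_zero m
  have hhead := hh _ hm0
  have hlam := hC _ (by omega : 1 ≤ m.1 0)
  have htail := norm_tailTerm_le (s := s) (a := a) (b := b) (d := d) hC (n := fun j => m.1 (j + 1))
    fun j hj => DecTuple.one_le_apply m (by omega)
  simp only [hN] at htail
  rw [norm_mul, norm_mul]
  calc ‖h (m.1 0)‖ * ‖((m.1 0 : ℂ) - lam)⁻¹‖ * ‖tailTerm s a b d lam fun j => m.1 (j + 1)‖
      ≤ c * (m.1 0 : ℝ)⁻¹ * (C * (m.1 0 : ℝ)⁻¹) *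
          (C ^ (N + 1) * ∏ j ∈ range (N + 1), (m.1 (j + 1) : ℝ)⁻¹) :=
        mul_le_mul (mul_le_mul hhead hlam (norm_nonneg _) ((norm_nonneg _).trans hhead)) htail
          (norm_nonneg _) (mul_nonneg ((norm_nonneg _).trans hhead) ((norm_nonneg _).trans hlam))
    _ = c * C * C ^ (N + 1) *
          (((m.1 0 : ℝ) ^ 2)⁻¹ * ∏ j ∈ range (N + 1), (m.1 (j + 1) : ℝ)⁻¹) := by ring

lemma mul_inv_pow_sub_inv_pow_pred_mul_inv_sub {K : Type*} [Field K] {x μ : K} (hx : x ≠ 0)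
    (hxμ : x ≠ μ) {a : ℕ} (ha : 1 ≤ a) :
    (μ * (x ^ a)⁻¹ - (x ^ (a - 1))⁻¹) * (x - μ)⁻¹ = -(x ^ a)⁻¹ := by
  obtain ⟨a, rfl⟩ : ∃ a', a = a' + 1 := ⟨a - 1, by omega⟩
  have hxμ' : x - μ ≠ 0 := sub_ne_zero.2 hxμ
  rw [Nat.add_sub_cancel, pow_succ]
  field_simp
  ring

lemma first_block_tsum_identity {N a : ℕ} (ha : 2 ≤ a) (hlam : ∀ p : ℕ, 0 < p → lam ≠ p)
    (G : (ℕ → ℕ) → ℂ)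
    (hA : Summable fun m : DecTuple (N + 2) =>
      ((m.1 0 : ℂ) ^ a)⁻¹ * ((m.1 0 : ℂ) - lam)⁻¹ * G fun j => m.1 (j + 1))
    (hB : Summable fun m : DecTuple (N + 2) =>
      ((m.1 0 : ℂ) ^ (a - 1))⁻¹ * ((m.1 0 : ℂ) - lam)⁻¹ * G fun j => m.1 (j + 1))
    (hC : Summable fun m : DecTuple (N + 2) =>
      (((m.1 0 : ℂ) - 1) ^ a)⁻¹ * ((m.1 0 : ℂ) - lam)⁻¹ * G fun j => m.1 (j + 1))
    (hD : Summable fun m : DecTuple (N + 2) =>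
      (((m.1 0 : ℂ) - 1) ^ (a - 1))⁻¹ * ((m.1 0 : ℂ) - lam)⁻¹ * G fun j => m.1 (j + 1)) :
    lam * ∑' m : DecTuple (N + 2),
        ((m.1 0 : ℂ) ^ a)⁻¹ * ((m.1 0 : ℂ) - lam)⁻¹ * G (fun j => m.1 (j + 1))
      - ∑' m : DecTuple (N + 2),
        ((m.1 0 : ℂ) ^ (a - 1))⁻¹ * ((m.1 0 : ℂ) - lam)⁻¹ * G (fun j => m.1 (j + 1))
      - ∑' n : DecTuple (N + 1), ((n.1 0 : ℂ) ^ a)⁻¹ * G n.1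
    = (lam - 1) * ∑' m : DecTuple (N + 2),
        (((m.1 0 : ℂ) - 1) ^ a)⁻¹ * ((m.1 0 : ℂ) - lam)⁻¹ * G (fun j => m.1 (j + 1))
      - ∑' m : DecTuple (N + 2),
        (((m.1 0 : ℂ) - 1) ^ (a - 1))⁻¹ * ((m.1 0 : ℂ) - lam)⁻¹ * G (fun j => m.1 (j + 1)) := by
  have hsum := ((hA.hasSum.mul_left lam).sub hB.hasSum).sub
    ((hC.hasSum.mul_left (lam - 1)).sub hD.hasSum)
  have hterm : ∀ m : DecTuple (N + 2),
      lam * (((m.1 0 : ℂ) ^ a)⁻¹ * ((m.1 0 : ℂ) - lam)⁻¹ * G fun j => m.1 (j + 1))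
        - ((m.1 0 : ℂ) ^ (a - 1))⁻¹ * ((m.1 0 : ℂ) - lam)⁻¹ * G (fun j => m.1 (j + 1))
        - ((lam - 1) * ((((m.1 0 : ℂ) - 1) ^ a)⁻¹ * ((m.1 0 : ℂ) - lam)⁻¹ *
              G fun j => m.1 (j + 1))
          - (((m.1 0 : ℂ) - 1) ^ (a - 1))⁻¹ * ((m.1 0 : ℂ) - lam)⁻¹ *
              G (fun j => m.1 (j + 1)))
      = ((((m.1 0 : ℂ) - 1) ^ a)⁻¹ - ((m.1 0 : ℂ) ^ a)⁻¹) * G fun j => m.1 (j + 1) := by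
    intro m
    have hm0 := DecTuple.two_le_apply_zero m
    have hx : (m.1 0 : ℂ) ≠ 0 := by exact_mod_cast (by omega : m.1 0 ≠ 0)
    have hx1 : (m.1 0 : ℂ) - 1 ≠ 0 := by
      rw [sub_ne_zero]; exact_mod_cast (by omega : m.1 0 ≠ 1)
    have hxlam : (m.1 0 : ℂ) ≠ lam := (hlam _ (by omega)).symm
    have h0 := mul_inv_pow_sub_inv_pow_pred_mul_inv_sub hx hxlam (by omega : 1 ≤ a)
    have h1 := mul_inv_pow_sub_inv_pow_pred_mul_inv_sub hx1 (sub_left_injective.ne hxlam)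
      (by omega : 1 ≤ a)
    rw [sub_sub_sub_cancel_right] at h1
    linear_combination (G fun j => m.1 (j + 1)) * (h0 - h1)
  have key := tsum_inv_sub_one_pow_sub_inv_pow_mul ha G (hsum.summable.congr hterm)
  rw [← tsum_congr hterm, hsum.tsum_eq] at key
  linear_combination key

theorem bracket_first_block_general (s : ℕ) (hs : 1 ≤ s) (a b : ℕ → ℕ)
    (ha1 : 2 ≤ a 0) (hb1 : 2 ≤ b 0)
    (lam : ℂ) (hlam : ∀ p : ℕ, 0 < p → lam ≠ (p : ℂ)) :
    lam * bracket s a b (fun _ => 0) lam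
      - bracket s (fun i => if i = 0 then a 0 - 1 else a i) b (fun _ => 0) lam
      - bracket s a (fun i => if i = 0 then b 0 - 1 else b i) (fun _ => 0) lam
    = (lam - 1) * bracket s a b (fun i => if i = 0 then 1 else 0) lam
      - bracket s (fun i => if i = 0 then a 0 - 1 else a i) b
          (fun i => if i = 0 then 1 else 0) lam := by
  have hb : 1 ≤ b 0 := by omega
  obtain ⟨N, hN⟩ : ∃ N, ∑ t ∈ range s, b t = N + 2 :=
    ⟨_, (Nat.sub_add_cancel (hb1.trans (single_le_sum (fun _ _ => Nat.zero_le _)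
      (mem_range.2 hs)))).symm⟩
  have hpred : (fun i => if i = 0 then b 0 - 1 else b i) = Function.update b 0 (b 0 - 1) :=
    funext fun i => (Function.update_apply b 0 (b 0 - 1) i).symm
  have htail {a' d' : ℕ → ℕ} (ha' : ∀ i, i ≠ 0 → a' i = a i) (hd' : ∀ i, i ≠ 0 → d' i = 0) :
      tailTerm s a' b d' lam = tailTerm s a b (fun _ => 0) lam :=
    tailTerm_congr (fun i hi => ha' i (by omega)) fun i hi => hd' i (by omega)
  rw [hpred, bracket_update_pred_eq_tsum hs hb hN, bracket_eq_tsum_mul_tailTerm hs hb hN,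
    bracket_eq_tsum_mul_tailTerm hs hb hN, bracket_eq_tsum_mul_tailTerm hs hb hN,
    bracket_eq_tsum_mul_tailTerm hs hb hN]
  simp only [htail (fun i hi => if_neg hi) (fun _ _ => rfl), htail (fun _ _ => rfl)
    (fun i hi => if_neg hi), htail (fun i hi => if_neg hi) (fun i hi => if_neg hi),
    ↓reduceIte, Nat.cast_zero, Nat.cast_one, sub_zero]
  refine first_block_tsum_identity (N := N) ha1 hlam _ ?_ ?_ ?_ ?_
  · exact summable_mul_tailTerm hN (fun k : ℕ => ((k : ℂ) ^ a 0)⁻¹) fun k _ =>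
      (norm_inv_natCast_pow_le k (by omega)).trans_eq (one_mul _).symm
  · exact summable_mul_tailTerm hN (fun k : ℕ => ((k : ℂ) ^ (a 0 - 1))⁻¹) fun k _ =>
      (norm_inv_natCast_pow_le k (by omega)).trans_eq (one_mul _).symm
  · exact summable_mul_tailTerm hN (fun k : ℕ => (((k : ℂ) - 1) ^ a 0)⁻¹) fun _ hk =>
      norm_inv_natCast_sub_one_pow_le hk (by omega)
  · exact summable_mul_tailTerm hN (fun k : ℕ => (((k : ℂ) - 1) ^ (a 0 - 1))⁻¹) fun _ hk =>
      norm_inv_natCast_sub_one_pow_le hk (by omega)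

/-- **Lemma (i)(a):** if `a₁ ≥ 2` and `b₁ ≥ 2`, with `λ' = λ - 1`, then
`λ·[{(a₁,0),b₁,…};λ] - [{(a₁-1,0),b₁,…};λ] - [{(a₁,0),b₁-1,…};λ]
  = λ'·[{(a₁,1),b₁,…};λ] - [{(a₁-1,1),b₁,…};λ]`,
where only the first block is modified and all brackets are evaluated at `λ`. -/
theorem bracket_first_block (s : ℕ) (hs : 1 ≤ s) (a b : ℕ → ℕ)
    (ha : ∀ i, i < s → 1 ≤ a i) (hb : ∀ i, i < s → 1 ≤ b i)
    (ha1 : 2 ≤ a 0) (hb1 : 2 ≤ b 0)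
    (lam : ℂ) (hlam : ∀ p : ℕ, 0 < p → lam ≠ (p : ℂ)) :
    lam * bracket s a b (fun _ => 0) lam
      - bracket s (fun i => if i = 0 then a 0 - 1 else a i) b (fun _ => 0) lam
      - bracket s a (fun i => if i = 0 then b 0 - 1 else b i) (fun _ => 0) lam
    = (lam - 1) * bracket s a b (fun i => if i = 0 then 1 else 0) lam
      - bracket s (fun i => if i = 0 then a 0 - 1 else a i) b
          (fun i => if i = 0 then 1 else 0) lam :=
  bracket_first_block_general s hs a b ha1 hb1 lam hlam
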